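/- (Quantum characteristic functions vanish at infinity; Proposition 4.9, first part, in wave-function form.) Let m ≥ 1, let (f_i)_{i∈ℕ} be a family of unit vectors in L²(ℝ^m), and let (p_i)_{i∈ℕ} be nonnegative reals with Σ_i p_i = 1. Define F : ℝ^m × ℝ^m → ℂ by F(a,b) := Σ_i p_i · A_{f_i}(a,b). Then F is continuous on ℝ^{2m}, and F(a,b) → 0 as ‖(a,b)‖ → ∞; that is, F belongs to C₀(ℝ^{2m}). -/

import Mathlib

open MeasureTheory Filter RealInnerProductSpace

noncomputable section

/-- The ambiguity function `A_f(a,b) = ∫ conj(f(x))·f(x−a)·e^{i⟨b,x⟩} dx` of a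
square-integrable wave function `f` on `ℝ^m`. -/
def ambiguity {m : ℕ}
    (f : Lp ℂ 2 (volume : Measure (EuclideanSpace ℝ (Fin m))))
    (a b : EuclideanSpace ℝ (Fin m)) : ℂ :=
  ∫ x, (starRingEnd ℂ) (f x) * f (x - a) * Complex.exp (Complex.I * (⟪b, x⟫ : ℝ))

/-!
Writing `A_f(a, b) = ⟪f, M_b T_a f⟫` with the unitary modulation `M_b` and translation `T_a` of
`L²` gives `|A_f - A_g| ≤ ‖f - g‖ (‖f‖ + ‖g‖)` uniformly on `ℝ^m × ℝ^m`. Since continuous functions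
vanishing at infinity are closed under uniform limits, by density it suffices to treat
compactly supported continuous `f`. Then `A_f(a, b) = 0` unless `a ∈ supp f - supp f`, for fixed
`a` the function `b ↦ A_f(a, b)` is a Fourier integral and tends to `0` by Riemann–Lebesgue, and
the family `(A_f(·, b))_b` is equicontinuous; by Ascoli the decay is uniform for `a` in the compact
set `supp f - supp f`. Finally `F` is a series of such functions dominated by `∑ p_i`.
-/

open Complex Topology Function
open scoped Pointwise ContDiff

theorem tendsto_uncurry_cocompact_of_equicontinuous {X Y E : Type*} [TopologicalSpace X]
    [TopologicalSpace Y] [NormedAddCommGroup E] {Φ : X → Y → E} {K : Set X} (hK : IsCompact K)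
    (hΦK : ∀ a ∉ K, ∀ b, Φ a b = 0) (hΦ : Equicontinuous fun b a => Φ a b)
    (hΦlim : ∀ a ∈ K, Tendsto (Φ a) (cocompact Y) (𝓝 0)) :
    Tendsto (uncurry Φ) (cocompact (X × Y)) (𝓝 0) := by
  -- Ascoli: on the compact set `K`, equicontinuity makes the pointwise convergence uniform.
  have hunif : TendstoUniformlyOn (fun b a => Φ a b) 0 (cocompact Y) K := by
    have := (EquicontinuousOn.tendsto_uniformOnFun_iff_pi' (𝔖 := {K}) (by simpa)
      (by simpa using hΦ.equicontinuousOn K) (cocompact Y) 0).2 ?_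
    · exact UniformOnFun.tendsto_iff_tendstoUniformlyOn.1 this K rfl
    · rw [tendsto_pi_nhds]
      rintro ⟨a, ha⟩
      exact hΦlim a (by simpa using ha)
  rw [Metric.tendsto_nhds]
  intro ε hε
  obtain ⟨L, hL, hLε⟩ := mem_cocompact.1 (Metric.tendstoUniformlyOn_iff.1 hunif ε hε)
  refine mem_cocompact.2 ⟨K ×ˢ L, hK.prod hL, fun ⟨a, b⟩ hab => ?_⟩
  by_cases ha : a ∈ K
  · simpa [dist_comm] using hLε (fun hb => hab ⟨ha, hb⟩) a ha
  · simpa [hΦK a ha b] using hε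

section

variable {V : Type*} [NormedAddCommGroup V] [InnerProductSpace ℝ V] [FiniteDimensional ℝ V]
  [MeasurableSpace V] [BorelSpace V]

theorem tendsto_integral_mul_exp_I_inner_cocompact (u : V → ℂ) :
    Tendsto (fun b => ∫ x, u x * exp (I * ⟪b, x⟫)) (cocompact V) (𝓝 0) := by
  -- Mathlib's Riemann–Lebesgue lemma is stated for the character `𝐞 (-⟪x, w⟫) = e^{-2πi⟪x, w⟫}`.
  have hscale : Tendsto (fun b : V => (-(2 * Real.pi)⁻¹) • b) (cocompact V) (cocompact V) :=
    (Homeomorph.smulOfNeZero _ (by simp [Real.pi_ne_zero])).map_cocompact.le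
  refine ((tendsto_integral_exp_inner_smul_cocompact u).comp hscale).congr fun b => ?_
  refine integral_congr_ae (Eventually.of_forall fun x => ?_)
  simp only [mul_inv_rev, neg_smul, inner_neg_right, real_inner_smul_right, real_inner_comm,
    neg_neg, Circle.smul_def, Real.fourierChar_apply, ofReal_mul, ofReal_ofNat, ofReal_inv,
    smul_eq_mul]
  rw [mul_comm (u x)]
  congr 2
  field_simp

/-- `ambiguity f` is `crossAmbiguity f f` by definition. -/
def crossAmbiguity (g h : V → ℂ) (a b : V) : ℂ :=
  ∫ x, (starRingEnd ℂ) (g x) * h (x - a) * exp (I * (⟪b, x⟫ : ℝ))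

section CompactSupport

variable {g h : V → ℂ}

theorem integrable_crossAmbiguity_integrand (hg : Continuous g) (hgs : HasCompactSupport g)
    (hh : Continuous h) (a b : V) :
    Integrable fun x => (starRingEnd ℂ) (g x) * h (x - a) * exp (I * (⟪b, x⟫ : ℝ)) := by
  refine Continuous.integrable_of_hasCompactSupport (by fun_prop) ?_
  exact ((hgs.comp_left (map_zero _)).mul_right).mul_right

theorem norm_crossAmbiguity_sub_le (hg : Continuous g) (hgs : HasCompactSupport g)
    (hh : Continuous h) {a c b : V} {δ : ℝ} (hδ : ∀ x, ‖h (x - a) - h (x - c)‖ ≤ δ) :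
    ‖crossAmbiguity g h a b - crossAmbiguity g h c b‖ ≤ (∫ x, ‖g x‖) * δ := by
  rw [crossAmbiguity, crossAmbiguity,
    ← integral_sub (integrable_crossAmbiguity_integrand hg hgs hh a b)
      (integrable_crossAmbiguity_integrand hg hgs hh c b), ← integral_mul_const]
  refine norm_integral_le_of_norm_le
    ((hg.norm.integrable_of_hasCompactSupport hgs.norm).mul_const _)
    (Eventually.of_forall fun x => ?_)
  rw [← sub_mul, ← mul_sub, norm_mul, norm_mul, Complex.norm_exp_I_mul_ofReal, mul_one,
    RCLike.norm_conj]
  exact mul_le_mul_of_nonneg_left (hδ x) (norm_nonneg _)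

theorem uniformEquicontinuous_crossAmbiguity (hg : Continuous g) (hgs : HasCompactSupport g)
    (hh : Continuous h) (hhs : HasCompactSupport h) :
    UniformEquicontinuous fun b a => crossAmbiguity g h a b := by
  rw [Metric.uniformEquicontinuous_iff]
  intro ε hε
  set C := ∫ x, ‖g x‖
  have hC : 0 ≤ C := integral_nonneg fun _ => norm_nonneg _
  obtain ⟨δ, hδ, hhδ⟩ := Metric.uniformContinuous_iff.1 (hhs.uniformContinuous_of_continuous hh)
    (ε / (C + 1)) (by positivity)
  refine ⟨δ, hδ, fun a c hac b => ?_⟩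
  have hmod : ∀ x, ‖h (x - a) - h (x - c)‖ ≤ ε / (C + 1) := fun x => by
    rw [← dist_eq_norm]
    exact (hhδ (by rwa [dist_sub_left])).le
  calc dist (crossAmbiguity g h a b) (crossAmbiguity g h c b)
      ≤ C * (ε / (C + 1)) := by
        rw [dist_eq_norm]
        exact norm_crossAmbiguity_sub_le hg hgs hh hmod
    _ < ε := by
      rw [← mul_div_assoc, div_lt_iff₀ (by positivity)]
      nlinarith

theorem continuous_uncurry_crossAmbiguity (hg : Continuous g) (hgs : HasCompactSupport g)
    (hh : Continuous h) (hhs : HasCompactSupport h) :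
    Continuous (uncurry (crossAmbiguity g h)) := by
  obtain ⟨C, hC⟩ := hh.bounded_above_of_compact_support hhs
  refine continuous_of_dominated (bound := fun x => ‖g x‖ * C)
    (fun z => (integrable_crossAmbiguity_integrand hg hgs hh z.1 z.2).aestronglyMeasurable)
    (fun z => Eventually.of_forall fun x => ?_)
    ((hg.norm.integrable_of_hasCompactSupport hgs.norm).mul_const _)
    (Eventually.of_forall fun x => by fun_prop)
  rw [norm_mul, norm_mul, Complex.norm_exp_I_mul_ofReal, mul_one, RCLike.norm_conj]
  exact mul_le_mul_of_nonneg_left (hC _) (norm_nonneg _)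

theorem crossAmbiguity_eq_zero_of_notMem_sub {a : V} (ha : a ∉ tsupport g - tsupport h)
    (b : V) : crossAmbiguity g h a b = 0 := by
  suffices (fun x => (starRingEnd ℂ) (g x) * h (x - a) * exp (I * (⟪b, x⟫ : ℝ))) = 0 by
    rw [crossAmbiguity, this, integral_zero']
  ext x
  by_cases hx : x ∈ tsupport g
  · have hxa : h (x - a) = 0 :=
      image_eq_zero_of_notMem_tsupport fun hxa => ha ⟨x, hx, x - a, hxa, sub_sub_cancel x a⟩
    simp [hxa]
  · simp [image_eq_zero_of_notMem_tsupport hx]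

theorem tendsto_uncurry_crossAmbiguity_cocompact (hg : Continuous g) (hgs : HasCompactSupport g)
    (hh : Continuous h) (hhs : HasCompactSupport h) :
    Tendsto (uncurry (crossAmbiguity g h)) (cocompact (V × V)) (𝓝 0) := by
  refine tendsto_uncurry_cocompact_of_equicontinuous ?_
    (fun a ha => crossAmbiguity_eq_zero_of_notMem_sub ha)
    (uniformEquicontinuous_crossAmbiguity hg hgs hh hhs).equicontinuous
    fun a _ => tendsto_integral_mul_exp_I_inner_cocompact _
  rw [← Set.sub_image_prod]
  exact (hgs.prod hhs).image continuous_sub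

end CompactSupport

section L2

theorem crossAmbiguity_congr_ae {g g' h h' : V → ℂ} (hg : g =ᵐ[volume] g')
    (hh : h =ᵐ[volume] h') : crossAmbiguity g h = crossAmbiguity g' h' := by
  ext a b
  refine integral_congr_ae ?_
  filter_upwards [hg, (measurePreserving_sub_right volume a).quasiMeasurePreserving.ae_eq_comp hh]
    with x hgx hhx
  simp only [comp_apply] at hhx
  rw [hgx, hhx]

theorem memLp_exp_I_inner_mul (b : V) (f : Lp ℂ 2 (volume : Measure V)) :
    MemLp (fun x => exp (I * (⟪b, x⟫ : ℝ)) * f x) 2 volume :=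
  (memLp_congr_norm (Lp.aestronglyMeasurable f)
    ((by fun_prop : Continuous fun x : V => exp (I * (⟪b, x⟫ : ℝ))).aestronglyMeasurable.mul
      (Lp.aestronglyMeasurable f))
    (Eventually.of_forall fun x => by
      rw [Pi.mul_apply, norm_mul, Complex.norm_exp_I_mul_ofReal, one_mul])).1 (Lp.memLp f)

def modulation (b : V) : Lp ℂ 2 (volume : Measure V) →ₗᵢ[ℂ] Lp ℂ 2 (volume : Measure V) where
  toFun f := (memLp_exp_I_inner_mul b f).toLp _
  map_add' f g := by
    rw [← MemLp.toLp_add]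
    refine MemLp.toLp_congr _ _ ?_
    filter_upwards [Lp.coeFn_add f g] with x hx
    simp only [hx, Pi.add_apply, mul_add]
  map_smul' c f := by
    rw [RingHom.id_apply, ← MemLp.toLp_const_smul]
    refine MemLp.toLp_congr _ _ ?_
    filter_upwards [Lp.coeFn_smul c f] with x hx
    simp only [hx, Pi.smul_apply, smul_eq_mul]
    ring
  norm_map' f := by
    change ‖(memLp_exp_I_inner_mul b f).toLp _‖ = ‖f‖
    rw [Lp.norm_toLp, Lp.norm_def]
    congr 1
    exact eLpNorm_congr_norm_ae <| Eventually.of_forall fun x => by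
      rw [norm_mul, Complex.norm_exp_I_mul_ofReal, one_mul]

theorem coeFn_modulation (b : V) (f : Lp ℂ 2 (volume : Measure V)) :
    modulation b f =ᵐ[volume] fun x => exp (I * (⟪b, x⟫ : ℝ)) * f x :=
  (memLp_exp_I_inner_mul b f).coeFn_toLp

def translation (a : V) : Lp ℂ 2 (volume : Measure V) →ₗᵢ[ℂ] Lp ℂ 2 (volume : Measure V) :=
  Lp.compMeasurePreservingₗᵢ ℂ (· - a) (measurePreserving_sub_right volume a)

theorem coeFn_translation (a : V) (f : Lp ℂ 2 (volume : Measure V)) :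
    translation a f =ᵐ[volume] fun x => f (x - a) :=
  Lp.coeFn_compMeasurePreserving f _

theorem crossAmbiguity_eq_inner (f g : Lp ℂ 2 (volume : Measure V)) (a b : V) :
    crossAmbiguity f g a b = inner ℂ f (modulation b (translation a g)) := by
  rw [L2.inner_def]
  refine integral_congr_ae ?_
  filter_upwards [coeFn_modulation b (translation a g), coeFn_translation a g] with x h1 h2
  rw [RCLike.inner_apply, h1, h2]
  ring

theorem norm_crossAmbiguity_le (f g : Lp ℂ 2 (volume : Measure V)) (a b : V) :
    ‖crossAmbiguity f g a b‖ ≤ ‖f‖ * ‖g‖ := by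
  rw [crossAmbiguity_eq_inner]
  exact (norm_inner_le_norm _ _).trans_eq (by simp)

theorem norm_crossAmbiguity_self_sub_le (f g : Lp ℂ 2 (volume : Measure V)) (a b : V) :
    ‖crossAmbiguity f f a b - crossAmbiguity g g a b‖ ≤ ‖f - g‖ * (‖f‖ + ‖g‖) := by
  set shift := (modulation b).comp (translation a)
  have hsplit : inner ℂ f (shift f) - inner ℂ g (shift g)
      = inner ℂ (f - g) (shift f) + inner ℂ g (shift (f - g)) := by
    rw [map_sub, inner_sub_left, inner_sub_right]
    ring
  rw [crossAmbiguity_eq_inner, crossAmbiguity_eq_inner]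
  change ‖inner ℂ f (shift f) - inner ℂ g (shift g)‖ ≤ _
  rw [hsplit]
  calc _ ≤ ‖f - g‖ * ‖shift f‖ + ‖g‖ * ‖shift (f - g)‖ :=
        (norm_add_le _ _).trans (add_le_add (norm_inner_le_norm _ _) (norm_inner_le_norm _ _))
    _ = ‖f - g‖ * (‖f‖ + ‖g‖) := by simp only [LinearIsometry.norm_map]; ring

theorem tendstoUniformly_crossAmbiguity_self (f : Lp ℂ 2 (volume : Measure V)) :
    TendstoUniformly (fun g : Lp ℂ 2 (volume : Measure V) => uncurry (crossAmbiguity g g))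
      (uncurry (crossAmbiguity f f)) (𝓝 f) := by
  have hbound : Tendsto (fun g : Lp ℂ 2 (volume : Measure V) => ‖f - g‖ * (‖f‖ + ‖g‖))
      (𝓝 f) (𝓝 0) := by
    have : Continuous fun g : Lp ℂ 2 (volume : Measure V) => ‖f - g‖ * (‖f‖ + ‖g‖) := by
      fun_prop
    simpa using this.tendsto f
  rw [Metric.tendstoUniformly_iff]
  intro ε hε
  filter_upwards [hbound.eventually (gt_mem_nhds hε)] with g hg z
  rw [dist_eq_norm]
  exact (norm_crossAmbiguity_self_sub_le f g z.1 z.2).trans_lt hg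

theorem continuous_and_tendsto_cocompact_crossAmbiguity_self (f : Lp ℂ 2 (volume : Measure V)) :
    Continuous (uncurry (crossAmbiguity f f)) ∧
      Tendsto (uncurry (crossAmbiguity f f)) (cocompact (V × V)) (𝓝 0) := by
  set D := {g : Lp ℂ 2 (volume : Measure V) |
    ∃ u, g =ᵐ[volume] u ∧ HasCompactSupport u ∧ ContDiff ℝ ∞ u}
  have hD : Dense D := Lp.dense_hasCompactSupport_contDiff (by norm_num)
  have hDC0 : ∀ g ∈ D, Continuous (uncurry (crossAmbiguity g g)) ∧
      Tendsto (uncurry (crossAmbiguity g g)) (cocompact (V × V)) (𝓝 0) := by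
    rintro g ⟨u, hgu, hus, hu⟩
    rw [crossAmbiguity_congr_ae hgu hgu]
    exact ⟨continuous_uncurry_crossAmbiguity hu.continuous hus hu.continuous hus,
      tendsto_uncurry_crossAmbiguity_cocompact hu.continuous hus hu.continuous hus⟩
  have : (𝓝[D] f).NeBot := mem_closure_iff_nhdsWithin_neBot.1 (hD f)
  have hunif : TendstoUniformly
      (fun g : Lp ℂ 2 (volume : Measure V) => uncurry (crossAmbiguity g g))
      (uncurry (crossAmbiguity f f)) (𝓝[D] f) := fun u hu =>
    (tendstoUniformly_crossAmbiguity_self f u hu).filter_mono nhdsWithin_le_nhds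
  have hDev : ∀ᶠ g in 𝓝[D] f, g ∈ D := self_mem_nhdsWithin
  exact ⟨hunif.continuous (hDev.mono fun g hg => (hDC0 g hg).1).frequently,
    hunif.tendsto_of_eventually_tendsto (hDev.mono fun g hg => (hDC0 g hg).2) tendsto_const_nhds⟩

end L2

end

theorem mixed_ambiguity_mem_C0_general
    (m : ℕ)
    (f : ℕ → Lp ℂ 2 (volume : Measure (EuclideanSpace ℝ (Fin m))))
    (hf : ∀ i, ‖f i‖ = 1)
    (p : ℕ → ℝ) (hp : ∀ i, 0 ≤ p i) (hpsum : ∑' i, p i = 1)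
    (F : EuclideanSpace ℝ (Fin m) × EuclideanSpace ℝ (Fin m) → ℂ)
    (hF : F = fun ab => ∑' i, (p i : ℂ) * ambiguity (f i) ab.1 ab.2) :
    Continuous F ∧
      Tendsto F (Filter.cocompact
        (EuclideanSpace ℝ (Fin m) × EuclideanSpace ℝ (Fin m))) (nhds 0) := by
  have hp_summable : Summable p := by
    by_contra hs
    simp [tsum_eq_zero_of_not_summable hs] at hpsum
  have hC0 i := continuous_and_tendsto_cocompact_crossAmbiguity_self (f i)
  have hbound i (z : EuclideanSpace ℝ (Fin m) × _) :
      ‖(p i : ℂ) * ambiguity (f i) z.1 z.2‖ ≤ p i := by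
    have h := norm_crossAmbiguity_le (f i) (f i) z.1 z.2
    rw [hf i, one_mul] at h
    rw [norm_mul, Complex.norm_real, Real.norm_of_nonneg (hp i)]
    exact mul_le_of_le_one_right (hp i) h
  subst hF
  refine ⟨continuous_tsum (fun i => continuous_const.mul (hC0 i).1) hp_summable hbound, ?_⟩
  simpa using tendsto_tsum_of_dominated_convergence (g := fun _ => 0) hp_summable
    (fun i => mul_zero (p i : ℂ) ▸ (hC0 i).2.const_mul (p i : ℂ))
    (Eventually.of_forall fun z i => hbound i z)

/-- Quantum characteristic functions vanish at infinity (Proposition 4.9, first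
part, in wave-function form): for unit vectors `f_i ∈ L²(ℝ^m)` and a probability
distribution `(p_i)`, the function `F(a,b) = Σ_i p_i·A_{f_i}(a,b)` is continuous and
vanishes at infinity, i.e. `F ∈ C₀(ℝ^{2m})`. -/
theorem mixed_ambiguity_mem_C0
    (m : ℕ) (hm : 1 ≤ m)
    (f : ℕ → Lp ℂ 2 (volume : Measure (EuclideanSpace ℝ (Fin m))))
    (hf : ∀ i, ‖f i‖ = 1)
    (p : ℕ → ℝ) (hp : ∀ i, 0 ≤ p i) (hpsum : ∑' i, p i = 1)
    (F : EuclideanSpace ℝ (Fin m) × EuclideanSpace ℝ (Fin m) → ℂ)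
    (hF : F = fun ab => ∑' i, (p i : ℂ) * ambiguity (f i) ab.1 ab.2) :
    Continuous F ∧
      Tendsto F (Filter.cocompact
        (EuclideanSpace ℝ (Fin m) × EuclideanSpace ℝ (Fin m))) (nhds 0) :=
  mixed_ambiguity_mem_C0_general m f hf p hp hpsum F hF
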